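/- The extension-set definition W_φ(x) = { y : φ(x,y) = φ^{↓X}(x) } in the Boolean max algebra fails Pouly–Kohlas condition for general X, Y not nested: there exist a Boolean valuation φ on two binary variables and sets X, Y with X ⊄ Y and Y ⊄ X such that c_φ^{↓X∪Y} ≠ { z ∈ Ω_{X∪Y} : z↓Y ∈ c_φ^{↓Y} and z↓(X−Y) ∈ W_{φ^{↓X}}(z↓(X∩Y)) }. -/

import Mathlib

open Classical

variable {V : Type*} [DecidableEq V]

/-- The set of configurations (tuples) over a finite set `S` of variables with frames `Ω`. -/
abbrev Cfg (Ω : V → Type*) (S : Finset V) := (v : {x // x ∈ S}) → Ω v.1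

/-- Restriction (tuple projection) of a configuration to a subset of its domain. -/
def restrict {Ω : V → Type*} {S T : Finset V} (h : S ⊆ T) (x : Cfg Ω T) : Cfg Ω S :=
  fun v => x ⟨v.1, h v.2⟩

/-- Extend a configuration to a larger domain by arbitrary values. -/
noncomputable def extendCfg {Ω : V → Type*} [∀ v, Nonempty (Ω v)] {S T : Finset V}
    (h : S ⊆ T) (x : Cfg Ω S) : Cfg Ω T :=
  fun v => if hv : v.1 ∈ S then x ⟨v.1, hv⟩ else Classical.arbitrary (Ω v.1)

theorem restrict_extendCfg {Ω : V → Type*} [∀ v, Nonempty (Ω v)] {S T : Finset V}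
    (h : S ⊆ T) (x : Cfg Ω S) : restrict h (extendCfg h x) = x := by
  funext v; simp [restrict, extendCfg, v.2]

/-- Projection by maximization: `φ^{↓X}(x) = max { φ(z) : z ∈ Ω_D, z↓X = x }`. -/
noncomputable def projv {Ω : V → Type*} [∀ v, Fintype (Ω v)] [∀ v, Nonempty (Ω v)]
    [∀ v, DecidableEq (Ω v)] {X D : Finset V} (φ : Cfg Ω D → ℝ) (h : X ⊆ D)
    (x : Cfg Ω X) : ℝ :=
  (Finset.univ.filter fun z : Cfg Ω D => restrict h z = x).sup'
    ⟨extendCfg h x, Finset.mem_filter.mpr ⟨Finset.mem_univ _, restrict_extendCfg h x⟩⟩ φ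

/-- The empty configuration `⋄`. -/
def emptyCfg {V : Type*} [DecidableEq V] {Ω : V → Type*} : Cfg Ω (∅ : Finset V) :=
  fun v => absurd v.2 (Finset.notMem_empty v.1)

section Projection

variable {Ω : V → Type*} [∀ v, Fintype (Ω v)] [∀ v, Nonempty (Ω v)]
  [∀ v, DecidableEq (Ω v)] {X D : Finset V} {φ : Cfg Ω D → ℝ} {h : X ⊆ D}

theorem le_projv {z : Cfg Ω D} {x : Cfg Ω X} (hz : restrict h z = x) : φ z ≤ projv φ h x :=
  Finset.le_sup' φ (Finset.mem_filter.mpr ⟨Finset.mem_univ _, hz⟩)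

theorem projv_le_of_forall_le {c : ℝ} (hc : ∀ z, φ z ≤ c) (x : Cfg Ω X) :
    projv φ h x ≤ c :=
  Finset.sup'_le _ _ fun z _ => hc z

theorem projv_eq_of_forall_le {c : ℝ} (hc : ∀ z, φ z ≤ c) {z : Cfg Ω D} {x : Cfg Ω X}
    (hz : restrict h z = x) (hzc : φ z = c) : projv φ h x = c :=
  le_antisymm (projv_le_of_forall_le hc x) (hzc ▸ le_projv hz)

theorem projv_of_forall_eq {c : ℝ} (hc : ∀ z, φ z = c) (x : Cfg Ω X) : projv φ h x = c :=
  projv_eq_of_forall_le (fun z => (hc z).le) (restrict_extendCfg h x) (hc _)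

end Projection

section Agreement

variable {ι α : Type*} {D : Finset ι}

/-- On two variables this is the valuation `φ(a, b) = [a = b]`. -/
noncomputable def agreeIndicator (z : Cfg (fun _ : ι => α) D) : ℝ :=
  if ∀ u v, z u = z v then 1 else 0

theorem agreeIndicator_eq_zero_or_one (z : Cfg (fun _ : ι => α) D) :
    agreeIndicator z = 0 ∨ agreeIndicator z = 1 := by
  unfold agreeIndicator; split_ifs <;> simp

theorem agreeIndicator_le_one (z : Cfg (fun _ : ι => α) D) : agreeIndicator z ≤ 1 := by
  unfold agreeIndicator; split_ifs <;> norm_num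

theorem agreeIndicator_const (b : α) :
    agreeIndicator (fun _ => b : Cfg (fun _ : ι => α) D) = 1 :=
  if_pos fun _ _ => rfl

theorem agreeIndicator_eq_zero {z : Cfg (fun _ : ι => α) D} {u v : {x // x ∈ D}}
    (huv : z u ≠ z v) : agreeIndicator z = 0 :=
  if_neg fun hz => huv (hz u v)

theorem Cfg.exists_eq_const [Nonempty α] {S : Finset ι} (hS : (S : Set ι).Subsingleton)
    (x : Cfg (fun _ : ι => α) S) : ∃ b, x = fun _ => b := by
  by_cases hne : Nonempty {v // v ∈ S}
  · obtain ⟨u⟩ := hne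
    exact ⟨x u, funext fun v => congrArg x (Subtype.ext (hS v.2 u.2))⟩
  · exact ⟨Classical.arbitrary α, funext fun v => (hne ⟨v⟩).elim⟩

theorem projv_agreeIndicator_of_subsingleton [DecidableEq ι] [Fintype α] [Nonempty α]
    [DecidableEq α] {S : Finset ι} (hS : (S : Set ι).Subsingleton) (h : S ⊆ D)
    (x : Cfg (fun _ : ι => α) S) :
    projv agreeIndicator h x = 1 := by
  obtain ⟨b, rfl⟩ := Cfg.exists_eq_const hS x
  exact projv_eq_of_forall_le agreeIndicator_le_one rfl (agreeIndicator_const b)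

end Agreement

/-- in the Boolean max algebra there exist a Boolean valuation
`φ` on two binary variables (with domain `X ∪ Y`) and sets `X ⊄ Y`, `Y ⊄ X`
such that `c_φ^{↓X∪Y}` differs from
`{ z : z↓Y ∈ c_φ^{↓Y} and z↓(X−Y) ∈ W_{φ^{↓X}}(z↓(X∩Y)) }`, the latter
membership condition being expressed as
`φ^{↓X}(z↓X) = (φ^{↓X})^{↓X∩Y}(z↓(X∩Y))`. -/
theorem pouly_kohlas_condition_fails :
    ∃ (X Y : Finset (Fin 2)) (φ : Cfg (fun _ : Fin 2 => Bool) (X ∪ Y) → ℝ),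
      (∀ z, φ z = 0 ∨ φ z = 1) ∧ ¬ X ⊆ Y ∧ ¬ Y ⊆ X ∧
      (restrict (Finset.Subset.refl (X ∪ Y)) ''
          {z | φ z = projv φ (Finset.empty_subset _) emptyCfg}
        ≠ {z | restrict (Finset.subset_union_right : Y ⊆ X ∪ Y) z
                  ∈ restrict (Finset.subset_union_right : Y ⊆ X ∪ Y) ''
                      {w | φ w = projv φ (Finset.empty_subset _) emptyCfg}
            ∧ projv φ Finset.subset_union_left (restrict Finset.subset_union_left z)
                = projv (projv φ (Finset.subset_union_left : X ⊆ X ∪ Y))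
                    (Finset.inter_subset_left : X ∩ Y ⊆ X)
                    (restrict ((Finset.inter_subset_left).trans Finset.subset_union_left) z)}) := by
  refine ⟨{0}, {1}, agreeIndicator, agreeIndicator_eq_zero_or_one, by decide, by decide, ?_⟩
  set φ : Cfg (fun _ : Fin 2 => Bool) ({0} ∪ {1}) → ℝ := agreeIndicator
  have hmax : projv φ (Finset.empty_subset _) emptyCfg = 1 :=
    projv_agreeIndicator_of_subsingleton (by simp) _ _
  have hprojX : ∀ x, projv φ Finset.subset_union_left x = 1 :=
    projv_agreeIndicator_of_subsingleton (by simp) _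
  -- `(0, 1)` is no maximizer, yet its `Y`-part extends to the maximizer `(1, 1)`
  -- and, `φ^{↓X}` being constant, its `X`-part lies in every `W`.
  let z : Cfg (fun _ : Fin 2 => Bool) ({0} ∪ {1}) := fun v => decide (v.1 = 1)
  intro heq
  obtain ⟨w, hw, hwz⟩ := (Set.ext_iff.mp heq z).mpr
    ⟨⟨fun _ => true, (agreeIndicator_const true).trans hmax.symm,
      by funext ⟨v, hv⟩; obtain rfl := Finset.mem_singleton.mp hv; rfl⟩,
      by rw [hprojX, projv_of_forall_eq hprojX]⟩
  have hw0 : φ w = 0 :=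
    agreeIndicator_eq_zero (u := ⟨0, by decide⟩) (v := ⟨1, by decide⟩)
      (by rw [show w = z from hwz]; simp [z])
  exact zero_ne_one (hw0.symm.trans (hw.trans hmax))
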